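/- For the district admissions rule Ch_d defined by sequential school choice (schools choose in a fixed order, removing contracts of previously chosen students), the 'parallel' rule Ch'_d(X) = Ch_{c_1}(X) ∪ ... ∪ Ch_{c_n}(X) is a completion of Ch_d: for every set of contracts X, if Ch'_d(X) is feasible for students then Ch'_d(X) = Ch_d(X). Moreover, if each school choice function Ch_{c_i} satisfies substitutability and the law of aggregate demand, then so does Ch'_d. -/

import Mathlib

/-!
Each school chooses only its own contracts, so the parallel choices are pairwise disjoint:
substitutability passes to their union, and so does the law of aggregate demand because the
size of the union is the sum of the sizes. If the union is feasible, then at the turn of school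
`c_i` the contracts removed in the sequential procedure belong to students chosen by earlier
schools, and none of them is chosen by `c_i` in parallel. Substitutability and the law of
aggregate demand imply that removing rejected contracts does not change a choice, so every
school chooses in the sequential procedure exactly what it chooses in parallel.
-/

open Finset

section

variable {K S : Type*} [DecidableEq K] [DecidableEq S]

/-- A set of contracts is feasible for students (at most one contract per
student). -/
def feasibleS (st : K → S) (X : Finset K) : Prop :=
  ∀ x ∈ X, ∀ y ∈ X, st x = st y → x = y

/-- The sequential district admissions rule: schools choose in the fixed
order `c_1, …, c_n`; when a school chooses, all contracts of previously
chosen students are removed. -/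
def seqCh {n : ℕ} (st : K → S) (Chs : Fin n → Finset K → Finset K)
    (X : Finset K) : Finset K :=
  (List.finRange n).foldl
    (fun acc i => acc ∪ Chs i (X.filter (fun x => ∀ y ∈ acc, st y ≠ st x))) ∅

/-- The parallel rule `Ch'_d(X) = Ch_{c_1}(X) ∪ … ∪ Ch_{c_n}(X)`. -/
def parCh {n : ℕ} (Chs : Fin n → Finset K → Finset K) (X : Finset K) :
    Finset K :=
  (Finset.univ : Finset (Fin n)).biUnion (fun i => Chs i X)

end

section

variable {K : Type*}

def Substitutable (Ch : Finset K → Finset K) : Prop :=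
  ∀ (X Y : Finset K), ∀ x ∈ X, X ⊆ Y → x ∈ Ch Y → x ∈ Ch X

def LawOfAggregateDemand (Ch : Finset K → Finset K) : Prop :=
  ∀ X Y : Finset K, X ⊆ Y → (Ch X).card ≤ (Ch Y).card

/-- Irrelevance of rejected contracts. -/
theorem Substitutable.choice_eq_of_subset {Ch : Finset K → Finset K} (hs : Substitutable Ch)
    (hl : LawOfAggregateDemand Ch) {X Y : Finset K} (hChY : Ch X ⊆ Y) (hYX : Y ⊆ X) :
    Ch Y = Ch X :=
  (eq_of_subset_of_card_le (fun x hx => hs Y X x (hChY hx) hYX hx) (hl Y X hYX)).symm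

variable {n : ℕ} {sch : K → Fin n} {Chs : Fin n → Finset K → Finset K}

def ChoosesOwnContracts (sch : K → Fin n) (Chs : Fin n → Finset K → Finset K) : Prop :=
  ∀ i X, Chs i X ⊆ X.filter (fun x => sch x = i)

theorem sch_eq_of_mem_choice (hsub : ChoosesOwnContracts sch Chs)
    {i : Fin n} {X : Finset K} {x : K} (hx : x ∈ Chs i X) : sch x = i :=
  (mem_filter.mp (hsub i X hx)).2

theorem mem_of_mem_choice (hsub : ChoosesOwnContracts sch Chs)
    {i : Fin n} {X : Finset K} {x : K} (hx : x ∈ Chs i X) : x ∈ X :=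
  (mem_filter.mp (hsub i X hx)).1

end

section

variable {K : Type*} [DecidableEq K]
variable {n : ℕ} {sch : K → Fin n} {Chs : Fin n → Finset K → Finset K}

theorem card_parCh (hsub : ChoosesOwnContracts sch Chs) (X : Finset K) :
    (parCh Chs X).card = ∑ i, (Chs i X).card :=
  card_biUnion fun _ _ _ _ hij => disjoint_left.mpr fun _ hxi hxj =>
    hij ((sch_eq_of_mem_choice hsub hxi).symm.trans (sch_eq_of_mem_choice hsub hxj))

theorem Substitutable.parCh (hs : ∀ i, Substitutable (Chs i)) : Substitutable (parCh Chs) := by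
  intro X Y x hxX hXY hx
  obtain ⟨i, -, hxi⟩ := mem_biUnion.mp hx
  exact mem_biUnion.mpr ⟨i, mem_univ i, hs i X Y x hxX hXY hxi⟩

theorem LawOfAggregateDemand.parCh (hsub : ChoosesOwnContracts sch Chs)
    (hl : ∀ i, LawOfAggregateDemand (Chs i)) : LawOfAggregateDemand (parCh Chs) := by
  intro X Y hXY
  rw [card_parCh hsub, card_parCh hsub]
  exact sum_le_sum fun i _ => hl i X Y hXY

end

section

variable {K S : Type*} [DecidableEq K] [DecidableEq S]

def seqStep {n : ℕ} (st : K → S) (Chs : Fin n → Finset K → Finset K) (X acc : Finset K)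
    (i : Fin n) : Finset K :=
  acc ∪ Chs i (X.filter (fun x => ∀ y ∈ acc, st y ≠ st x))

theorem seqCh_eq_foldl_seqStep {n : ℕ} (Chs : Fin n → Finset K → Finset K) (st : K → S)
    (X : Finset K) :
    seqCh st Chs X = (List.finRange n).foldl (seqStep st Chs X) ∅ :=
  rfl

variable {n : ℕ} {sch : K → Fin n} {Chs : Fin n → Finset K → Finset K}

/-- By feasibility, a student chosen by school `i` holds no other parallel-chosen contract, so
the filter only removes contracts that `Chs i` rejects. -/
theorem seqStep_biUnion (hsub : ChoosesOwnContracts sch Chs)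
    (hs : ∀ i, Substitutable (Chs i)) (hl : ∀ i, LawOfAggregateDemand (Chs i))
    {st : K → S} {X : Finset K} (hf : feasibleS st (parCh Chs X))
    {J : Finset (Fin n)} {i : Fin n} (hi : i ∉ J) :
    seqStep st Chs X (J.biUnion fun j => Chs j X) i = (insert i J).biUnion fun j => Chs j X := by
  have hkept :
      Chs i X ⊆ X.filter fun x => ∀ y ∈ J.biUnion (fun j => Chs j X), st y ≠ st x := by
    intro x hx
    refine mem_filter.mpr ⟨mem_of_mem_choice hsub hx, fun y hy hst => ?_⟩
    obtain ⟨j, hj, hyj⟩ := mem_biUnion.mp hy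
    have hyx : y = x := hf y (mem_biUnion.mpr ⟨j, mem_univ j, hyj⟩)
      x (mem_biUnion.mpr ⟨i, mem_univ i, hx⟩) hst
    rw [hyx] at hyj
    exact hi ((sch_eq_of_mem_choice hsub hyj).symm.trans (sch_eq_of_mem_choice hsub hx) ▸ hj)
  rw [seqStep, (hs i).choice_eq_of_subset (hl i) hkept (filter_subset _ X), biUnion_insert,
    union_comm]

theorem foldl_seqStep_biUnion (hsub : ChoosesOwnContracts sch Chs)
    (hs : ∀ i, Substitutable (Chs i)) (hl : ∀ i, LawOfAggregateDemand (Chs i))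
    {st : K → S} {X : Finset K} (hf : feasibleS st (parCh Chs X)) :
    ∀ (l : List (Fin n)) (J : Finset (Fin n)), l.Nodup → Disjoint J l.toFinset →
      l.foldl (seqStep st Chs X) (J.biUnion fun j => Chs j X) =
        (J ∪ l.toFinset).biUnion fun j => Chs j X
  | [], J, _, _ => by simp
  | i :: l, J, hnd, hdisj => by
    obtain ⟨hil, hl_nd⟩ := List.nodup_cons.mp hnd
    rw [List.toFinset_cons, disjoint_insert_right] at hdisj
    rw [List.foldl_cons, seqStep_biUnion hsub hs hl hf hdisj.1,
      foldl_seqStep_biUnion hsub hs hl hf l (insert i J) hl_nd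
        (disjoint_insert_left.mpr ⟨fun h => hil (List.mem_toFinset.mp h), hdisj.2⟩),
      List.toFinset_cons, insert_union, union_insert]

theorem parCh_eq_seqCh_of_feasible (hsub : ChoosesOwnContracts sch Chs)
    (hs : ∀ i, Substitutable (Chs i)) (hl : ∀ i, LawOfAggregateDemand (Chs i))
    {st : K → S} {X : Finset K} (hf : feasibleS st (parCh Chs X)) :
    parCh Chs X = seqCh st Chs X := by
  have hfold := foldl_seqStep_biUnion hsub hs hl hf (List.finRange n) ∅ (List.nodup_finRange n)
    (disjoint_empty_left _)
  rw [biUnion_empty, empty_union, List.toFinset_finRange] at hfold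
  rw [seqCh_eq_foldl_seqStep Chs, hfold, parCh]

end

section

variable {K S : Type*} [DecidableEq K] [DecidableEq S]

theorem parCh_completion_substitutable_lad_general {n : ℕ}
    (st : K → S) (sch : K → Fin n)
    (Chs : Fin n → Finset K → Finset K)
    (hsub : ∀ i X, Chs i X ⊆ X.filter (fun x => sch x = i))
    (hsubst : ∀ i (X Y : Finset K), ∀ x ∈ X, X ⊆ Y → x ∈ Chs i Y → x ∈ Chs i X)
    (hlad : ∀ i (X Y : Finset K), X ⊆ Y → (Chs i X).card ≤ (Chs i Y).card) :
    (∀ X : Finset K, feasibleS st (parCh Chs X) → parCh Chs X = seqCh st Chs X) ∧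
    (∀ (X Y : Finset K), ∀ x ∈ X, X ⊆ Y → x ∈ parCh Chs Y → x ∈ parCh Chs X) ∧
    (∀ X Y : Finset K, X ⊆ Y → (parCh Chs X).card ≤ (parCh Chs Y).card) :=
  ⟨fun _ hf => parCh_eq_seqCh_of_feasible hsub hsubst hlad hf,
    Substitutable.parCh hsubst, LawOfAggregateDemand.parCh hsub hlad⟩

/-- The parallel rule is a completion of the sequential district rule, and
it inherits substitutability and the law of aggregate demand from the
schools' choice functions. -/
theorem parCh_completion_substitutable_lad {n : ℕ}
    (st : K → S) (sch : K → Fin n)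
    (Chs : Fin n → Finset K → Finset K)
    (hsub : ∀ i X, Chs i X ⊆ X.filter (fun x => sch x = i))
    (hsubst : ∀ i (X Y : Finset K), ∀ x ∈ X, X ⊆ Y → x ∈ Chs i Y → x ∈ Chs i X)
    (hlad : ∀ i (X Y : Finset K), X ⊆ Y → (Chs i X).card ≤ (Chs i Y).card)
    (hirc : ∀ i (X : Finset K) x, x ∈ X → x ∉ Chs i X →
      Chs i (X.erase x) = Chs i X) :
    (∀ X : Finset K, feasibleS st (parCh Chs X) → parCh Chs X = seqCh st Chs X) ∧
    (∀ (X Y : Finset K), ∀ x ∈ X, X ⊆ Y → x ∈ parCh Chs Y → x ∈ parCh Chs X) ∧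
    (∀ X Y : Finset K, X ⊆ Y → (parCh Chs X).card ≤ (parCh Chs Y).card) :=
  parCh_completion_substitutable_lad_general st sch Chs hsub hsubst hlad

end
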